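/- Let X be a Banach space with a 1-unconditional basis, Y = [x_n] a block subspace with ∪_n supp x_n = ℕ, T: Y → X bounded with supp(T x_n) ⊆ supp(x_n) for all n. Fix k ∈ ℕ, define A_k = ∪_n {i ∈ supp x_n : |x_n(i)| ≤ 2^{-k}|T x_n(i)|}, let D_k be the diagonal operator with D_k e_i = 0 for i ∈ A_k and D_k e_i = (T x_n(i)/x_n(i)) e_i for i ∈ supp x_n \ A_k, and T_k = P_{A_k} ∘ T. Then D_k is bounded with ‖D_k‖ ≤ 2^k, and T = D_k|_Y + T_k. -/

import Mathlib

open scoped BigOperators Classical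
open Filter Topology

structure SchauderBasisOld (X : Type*) [NormedAddCommGroup X] [NormedSpace ℝ X] where
  e : ℕ → X
  coord : ℕ → X →L[ℝ] ℝ
  ortho : ∀ i j, coord i (e j) = if i = j then 1 else 0
  expansion : ∀ x : X, HasSum (fun i => coord i x • e i) x

section Defs

variable {X : Type*} [NormedAddCommGroup X] [NormedSpace ℝ X]

def SchauderBasisOld.IsUnconditionalWith (b : SchauderBasisOld X) (C : ℝ) : Prop :=
  ∀ x y : X, (∀ i, |b.coord i y| ≤ |b.coord i x|) → ‖y‖ ≤ C * ‖x‖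

def SchauderBasisOld.supp (b : SchauderBasisOld X) (x : X) : Set ℕ := {i | b.coord i x ≠ 0}

def StrictlySingular {E F : Type*} [NormedAddCommGroup E] [NormedSpace ℝ E]
    [NormedAddCommGroup F] [NormedSpace ℝ F] (T : E →L[ℝ] F) : Prop :=
  ∀ Y : Submodule ℝ E, ¬ FiniteDimensional ℝ Y →
    ¬ ∃ c : ℝ, 0 < c ∧ ∀ y ∈ Y, c * ‖y‖ ≤ ‖T y‖

def SchauderBasisOld.TightBySupport (b : SchauderBasisOld X) : Prop :=
  ∀ Y Z : Submodule ℝ X, IsClosed (Y : Set X) → IsClosed (Z : Set X) →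
    ¬ FiniteDimensional ℝ Y → ¬ FiniteDimensional ℝ Z →
    (∀ y ∈ Y, ∀ z ∈ Z, ∀ i, b.coord i y ≠ 0 → b.coord i z = 0) →
    IsEmpty (Y ≃L[ℝ] Z)

def SchauderBasisOld.IsBlockSequence (b : SchauderBasisOld X) (x : ℕ → X) : Prop :=
  (∀ n, x n ≠ 0) ∧ (∀ n, (b.supp (x n)).Finite) ∧
    ∀ m n i j, m < n → b.coord i (x m) ≠ 0 → b.coord j (x n) ≠ 0 → i < j

def closedSpan (x : ℕ → X) : Submodule ℝ X :=
  (Submodule.span ℝ (Set.range x)).topologicalClosure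

def SchauderBasisOld.IsDiagonal (b : SchauderBasisOld X) (D : X →L[ℝ] X) : Prop :=
  ∀ i, ∃ lam : ℝ, D (b.e i) = lam • b.e i

def IsL1Average (b : SchauderBasisOld X) (x : X) (n : ℕ) (c : ℝ) : Prop :=
  0 < n ∧ 1 ≤ c ∧ ∃ xs : Fin n → X,
    (∀ i, ‖xs i‖ ≤ 1) ∧
    (∀ i j : Fin n, i < j → ∀ p q, b.coord p (xs i) ≠ 0 → b.coord q (xs j) ≠ 0 → p < q) ∧
    x = (n : ℝ)⁻¹ • ∑ i, xs i ∧ 1 / c ≤ ‖x‖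

end Defs

/-!
Off `A` the multiplier `μ i = T xₙ(i) / xₙ(i)` has modulus at most `2 ^ k`, so by
1-unconditionality the diagonal operator `D` has norm at most `2 ^ k`. The identity
`T = D + P_A T` holds coordinatewise on each block `xₙ`: on `A` the `D`-term vanishes, off `A`
the `P_A`-term does and `μ i * xₙ(i) = T xₙ(i)`, also where `xₙ(i) = 0` because
`supp (T xₙ) ⊆ supp xₙ`. Both sides are continuous, so the identity passes from the span of the
`xₙ` to its closure.
-/

namespace SchauderBasisOld

variable {X : Type*} [NormedAddCommGroup X] [NormedSpace ℝ X] (b : SchauderBasisOld X)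

theorem coord_eq_of_hasSum {v : X} {f : ℕ → ℝ} (hf : HasSum (fun i => f i • b.e i) v) (j : ℕ) :
    b.coord j v = f j := by
  have hj : HasSum (fun i => b.coord j (f i • b.e i)) (b.coord j v) := (b.coord j).hasSum hf
  have hterm : (fun i => b.coord j (f i • b.e i)) = fun i => if i = j then f j else 0 := by
    funext i
    by_cases h : i = j
    · subst h; simp [b.ortho]
    · simp [b.ortho, h, Ne.symm h]
  rw [hterm] at hj
  exact hj.unique (hasSum_ite_eq j (f j))

theorem ext_coord {v w : X} (h : ∀ j, b.coord j v = b.coord j w) : v = w := by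
  have hv := b.expansion v
  simp_rw [h] at hv
  exact hv.unique (b.expansion w)

theorem coord_apply_of_diagonal {D : X →L[ℝ] X} {d : ℕ → ℝ} (hD : ∀ i, D (b.e i) = d i • b.e i)
    (u : X) (j : ℕ) : b.coord j (D u) = d j * b.coord j u := by
  refine b.coord_eq_of_hasSum (f := fun i => d i * b.coord i u) ?_ j
  convert D.hasSum (b.expansion u) using 2 with i
  rw [map_smul, hD, smul_smul, mul_comm]

theorem opNorm_le_of_diagonal (hb : b.IsUnconditionalWith 1) {D : X →L[ℝ] X} {d : ℕ → ℝ}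
    (hD : ∀ i, D (b.e i) = d i • b.e i) {C : ℝ} (hd : ∀ i, |d i| ≤ C) : ‖D‖ ≤ C := by
  have hC : 0 ≤ C := (abs_nonneg _).trans (hd 0)
  refine D.opNorm_le_bound hC fun u => ?_
  calc ‖D u‖ ≤ 1 * ‖C • u‖ := hb _ _ fun i => by
        rw [b.coord_apply_of_diagonal hD, map_smul, smul_eq_mul, abs_mul, abs_mul, abs_of_nonneg hC]
        exact mul_le_mul_of_nonneg_right (hd i) (abs_nonneg _)
    _ = C * ‖u‖ := by rw [one_mul, norm_smul, Real.norm_of_nonneg hC]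

end SchauderBasisOld

section closedSpan

variable {X : Type*} [NormedAddCommGroup X] [NormedSpace ℝ X]

theorem mem_closedSpan (x : ℕ → X) (n : ℕ) : x n ∈ closedSpan x :=
  Submodule.le_topologicalClosure _ (Submodule.subset_span ⟨n, rfl⟩)

theorem closedSpan_ext {F : Type*} [NormedAddCommGroup F] [NormedSpace ℝ F] {x : ℕ → X}
    {S S' : closedSpan x →L[ℝ] F}
    (h : ∀ n, S ⟨x n, mem_closedSpan x n⟩ = S' ⟨x n, mem_closedSpan x n⟩) : S = S' := by
  set g : ℕ → closedSpan x := fun n => ⟨x n, mem_closedSpan x n⟩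
  have himg : Subtype.val '' (Submodule.span ℝ (Set.range g) : Set (closedSpan x)) =
      Submodule.span ℝ (Set.range x) := by
    rw [← (closedSpan x).coe_subtype, ← Submodule.map_coe, Submodule.map_span, ← Set.range_comp]
    rfl
  have hdense : Dense (Submodule.span ℝ (Set.range g) : Set (closedSpan x)) := by
    intro u
    rw [closure_subtype, himg, ← Submodule.topologicalClosure_coe]
    exact u.2
  exact ContinuousLinearMap.ext_on hdense (by rintro _ ⟨n, rfl⟩; exact h n)

end closedSpan

theorem abs_div_le_of_inv_mul_lt {a t c : ℝ} (hc : 0 < c) (h : c⁻¹ * |t| < |a|) : |t / a| ≤ c := by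
  have ha : 0 < |a| := (mul_nonneg (inv_nonneg.2 hc.le) (abs_nonneg t)).trans_lt h
  rw [abs_div, div_le_iff₀ ha]
  rw [inv_mul_lt_iff₀ hc] at h
  exact h.le

theorem stmt15_general {X : Type*} [NormedAddCommGroup X] [NormedSpace ℝ X]
    (b : SchauderBasisOld X) (hb : b.IsUnconditionalWith 1)
    (x : ℕ → X)
    (hmem : ∀ n, x n ∈ closedSpan x)
    (hfull : ∀ i, ∃ n, b.coord i (x n) ≠ 0)
    (T : ↥(closedSpan x) →L[ℝ] X)
    -- supp(T xₙ) ⊆ supp(xₙ)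
    (hsupp : ∀ n i, b.coord i (T ⟨x n, hmem n⟩) ≠ 0 → b.coord i (x n) ≠ 0)
    (k : ℕ) (A : Set ℕ)
    (hA : A = {i | ∃ n, b.coord i (x n) ≠ 0 ∧
      |b.coord i (x n)| ≤ (2 : ℝ)⁻¹ ^ k * |b.coord i (T ⟨x n, hmem n⟩)|})
    (μ : ℕ → ℝ)
    (hμ : ∀ n i, b.coord i (x n) ≠ 0 →
      μ i = b.coord i (T ⟨x n, hmem n⟩) / b.coord i (x n))
    (D : X →L[ℝ] X)
    (hD : ∀ i, D (b.e i) = (if i ∈ A then 0 else μ i) • b.e i)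
    (P : Set ℕ → (X →L[ℝ] X))
    (hP : ∀ (G : Set ℕ) (u : X) (i : ℕ),
      b.coord i (P G u) = if i ∈ G then b.coord i u else 0) :
    ‖D‖ ≤ (2 : ℝ) ^ k ∧ ∀ u : ↥(closedSpan x), T u = D (u : X) + P A (T u) := by
  have hmult : ∀ i, |if i ∈ A then 0 else μ i| ≤ (2 : ℝ) ^ k := by
    intro i
    split_ifs with hi
    · simp
    obtain ⟨n, hn⟩ := hfull i
    rw [hμ n i hn]
    refine abs_div_le_of_inv_mul_lt (by positivity) (not_le.1 fun hle => hi ?_)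
    exact hA ▸ ⟨n, hn, by rwa [inv_pow]⟩
  refine ⟨b.opNorm_le_of_diagonal hb hD hmult, fun u => ?_⟩
  have hgen : ∀ n, T ⟨x n, hmem n⟩ = D (x n) + P A (T ⟨x n, hmem n⟩) := fun n =>
    b.ext_coord fun i => by
      rw [map_add, b.coord_apply_of_diagonal hD, hP]
      split_ifs with hi
      · ring
      by_cases hn : b.coord i (x n) = 0
      · rw [hn, not_imp_comm.1 (hsupp n i) (not_not.2 hn)]; ring
      · rw [hμ n i hn, div_mul_cancel₀ _ hn, add_zero]
  have hop : T = D.comp (closedSpan x).subtypeL + (P A).comp T := closedSpan_ext hgen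
  exact DFunLike.congr_fun hop u

/-- with A_k and the diagonal operator D_k (vanishing on A_k and
with entries T xₙ(i)/xₙ(i) off A_k) and T_k = P_{A_k} ∘ T, one has
‖D_k‖ ≤ 2^k and T = D_k|_Y + T_k. -/
theorem stmt15 {X : Type*} [NormedAddCommGroup X] [NormedSpace ℝ X] [CompleteSpace X]
    (b : SchauderBasisOld X) (hb : b.IsUnconditionalWith 1)
    (x : ℕ → X) (hx : b.IsBlockSequence x)
    (hmem : ∀ n, x n ∈ closedSpan x)
    (hfull : ∀ i, ∃ n, b.coord i (x n) ≠ 0)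
    (T : ↥(closedSpan x) →L[ℝ] X)
    -- supp(T xₙ) ⊆ supp(xₙ)
    (hsupp : ∀ n i, b.coord i (T ⟨x n, hmem n⟩) ≠ 0 → b.coord i (x n) ≠ 0)
    (k : ℕ) (A : Set ℕ)
    (hA : A = {i | ∃ n, b.coord i (x n) ≠ 0 ∧
      |b.coord i (x n)| ≤ (2 : ℝ)⁻¹ ^ k * |b.coord i (T ⟨x n, hmem n⟩)|})
    (μ : ℕ → ℝ)
    (hμ : ∀ n i, b.coord i (x n) ≠ 0 →
      μ i = b.coord i (T ⟨x n, hmem n⟩) / b.coord i (x n))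
    (D : X →L[ℝ] X)
    (hD : ∀ i, D (b.e i) = (if i ∈ A then 0 else μ i) • b.e i)
    (P : Set ℕ → (X →L[ℝ] X))
    (hP : ∀ (G : Set ℕ) (u : X) (i : ℕ),
      b.coord i (P G u) = if i ∈ G then b.coord i u else 0) :
    ‖D‖ ≤ (2 : ℝ) ^ k ∧ ∀ u : ↥(closedSpan x), T u = D (u : X) + P A (T u) :=
  stmt15_general b hb x hmem hfull T hsupp k A hA μ hμ D hD P hP
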